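/- arXiv:0907.5593 — 3 statements merged into one kernel-verified Lean document; each statement's English description precedes it below -/
import Mathlib

section
/- For every natural number n there exist constants C > 0 and δ > 0 such that for all real λ with 0 < λ < δ one has |Z(λ) − Σ_{k=0}^{n−1} u_k(λ)| ≤ C·λ^n. In other words, the formal perturbative power series Σ_{k≥0} u_k(λ) is an asymptotic expansion of Z(λ) as λ → 0⁺. -/
/-!
Inside the Gaussian integral, replace `exp (-λφ⁴/24)` by its Taylor polynomial of degree `n - 1`:
term by term this produces exactly the `u k λ`, the Gaussian moments `∫ φ⁴ᵏ e^{-φ²/2}` being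
Gamma values. For `t ≥ 0` the Taylor remainder of `exp (-t)` is at most the first omitted term
`tⁿ / n!`, so `|Z λ - ∑_{k<n} u k λ| ≤ |u n λ| = |u n 1| λⁿ` for every `λ ≥ 0`.
-/

open MeasureTheory

noncomputable section

/-- The partition function of zero-dimensional φ⁴ theory. -/
def Z (lam : ℝ) : ℝ :=
  (1 / Real.sqrt (2 * Real.pi)) * ∫ φ : ℝ, Real.exp (-φ ^ 2 / 2 - (lam / 24) * φ ^ 4)

/-- The k-th term of the perturbative expansion of `Z`. -/
def u (k : ℕ) (lam : ℝ) : ℝ :=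
  (1 / Real.sqrt Real.pi) * ((-1) ^ k / (Nat.factorial k : ℝ)) *
    Real.Gamma (1 / 2 + 2 * k) * (lam / 6) ^ k

open Real Finset
open scoped Nat

theorem hasDerivAt_sum_neg_pow_div_factorial (n : ℕ) (x : ℝ) :
    HasDerivAt (fun y : ℝ => ∑ k ∈ range (n + 1), (-y) ^ k / k !)
      (-∑ k ∈ range n, (-x) ^ k / k !) x := by
  induction n with
  | zero => simpa using hasDerivAt_const x (1 : ℝ)
  | succ n ih =>
    simp_rw [sum_range_succ _ (n + 1)]
    refine (ih.add (((hasDerivAt_pow (n + 1) (-x)).comp x (hasDerivAt_neg x)).div_const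
      ((n + 1)! : ℝ))).congr_deriv ?_
    rw [sum_range_succ, Nat.factorial_succ, Nat.add_sub_cancel]
    push_cast
    field_simp
    ring

theorem abs_exp_neg_sub_sum_le (n : ℕ) {x : ℝ} (hx : 0 ≤ x) :
    |exp (-x) - ∑ k ∈ range n, (-x) ^ k / k !| ≤ x ^ n / n ! := by
  induction n generalizing x with
  | zero => simpa using exp_le_one_iff.2 (neg_nonpos.2 hx)
  | succ n ih =>
    have hderiv (t : ℝ) :
        HasDerivAt (fun y : ℝ => exp (-y) - ∑ k ∈ range (n + 1), (-y) ^ k / k !)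
          (-(exp (-t) - ∑ k ∈ range n, (-t) ^ k / k !)) t :=
      ((hasDerivAt_neg t).exp.sub (hasDerivAt_sum_neg_pow_div_factorial n t)).congr_deriv
        (by ring)
    have hbound (t : ℝ) :
        HasDerivAt (fun y : ℝ => y ^ (n + 1) / (n + 1)!) (t ^ n / n !) t := by
      refine ((hasDerivAt_pow (n + 1) t).div_const ((n + 1)! : ℝ)).congr_deriv ?_
      rw [Nat.factorial_succ, Nat.add_sub_cancel]
      push_cast
      field_simp
    refine image_norm_le_of_norm_deriv_right_le_deriv_boundary (a := 0)
      (fun t _ => (hderiv t).continuousAt.continuousWithinAt)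
      (fun t _ => (hderiv t).hasDerivWithinAt) ?_ hbound
      (fun t ht => by simpa only [norm_neg, Real.norm_eq_abs] using ih ht.1) ⟨hx, le_rfl⟩
    simp [sum_range_succ']

theorem integrable_pow_mul_exp_neg_sq_div_two (m : ℕ) :
    Integrable fun x : ℝ => x ^ m * exp (-x ^ 2 / 2) := by
  have h := integrable_rpow_mul_exp_neg_mul_sq (b := 1 / 2) (by norm_num)
    (neg_one_lt_zero.trans_le (Nat.cast_nonneg m))
  simp only [rpow_natCast] at h
  convert h using 1
  ext x
  ring_nf

theorem integral_even_pow_mul_exp_neg_sq_div_two (m : ℕ) :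
    ∫ x : ℝ, x ^ (2 * m) * exp (-x ^ 2 / 2) = √2 * 2 ^ m * Gamma (m + 1 / 2) := by
  have hq : (-1 : ℝ) < (2 * m : ℕ) := neg_one_lt_zero.trans_le (Nat.cast_nonneg _)
  calc ∫ x : ℝ, x ^ (2 * m) * exp (-x ^ 2 / 2)
      = ∫ x : ℝ, |x| ^ (2 * m) * exp (-|x| ^ 2 / 2) := by simp_rw [pow_mul, sq_abs]
    _ = 2 * ∫ x in Set.Ioi (0 : ℝ), x ^ ((2 * m : ℕ) : ℝ) * exp (-(1 / 2) * x ^ (2 : ℝ)) := by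
        rw [integral_comp_abs (f := fun x => x ^ (2 * m) * exp (-x ^ 2 / 2))]
        congr 1
        refine setIntegral_congr_fun measurableSet_Ioi fun x _ => ?_
        simp only [rpow_natCast, rpow_two]
        ring_nf
    _ = 2 * ((1 / 2) ^ (-((2 * m : ℕ) + 1) / 2 : ℝ) * (1 / 2) *
          Gamma (((2 * m : ℕ) + 1) / 2)) := by
        rw [integral_rpow_mul_exp_neg_mul_rpow (by norm_num) hq (by norm_num)]
    _ = √2 * 2 ^ m * Gamma (m + 1 / 2) := by
        have hpow : (1 / 2 : ℝ) ^ (-((2 * m : ℕ) + 1) / 2 : ℝ) = 2 ^ m * √2 := by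
          rw [one_div, inv_rpow zero_le_two, ← rpow_neg zero_le_two,
            show -(-((2 * m : ℕ) + 1) / 2 : ℝ) = m + 1 / 2 by push_cast; ring,
            rpow_add zero_lt_two, rpow_natCast, ← sqrt_eq_rpow]
        rw [hpow, show (((2 * m : ℕ) + 1) / 2 : ℝ) = m + 1 / 2 by push_cast; ring]
        ring

theorem u_eq_integral (k : ℕ) (lam : ℝ) :
    u k lam = 1 / √(2 * π) * ∫ x : ℝ, exp (-x ^ 2 / 2) * ((-(lam / 24 * x ^ 4)) ^ k / k !) := by
  have hintegrand (x : ℝ) : exp (-x ^ 2 / 2) * ((-(lam / 24 * x ^ 4)) ^ k / k !)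
      = (-(lam / 24)) ^ k / k ! * (x ^ (2 * (2 * k)) * exp (-x ^ 2 / 2)) := by
    ring
  simp_rw [hintegrand, integral_const_mul, integral_even_pow_mul_exp_neg_sq_div_two,
    sqrt_mul zero_le_two, u]
  have h24 : (-(lam / 24)) ^ k * 2 ^ (2 * k) = (-1) ^ k * (lam / 6) ^ k := by
    rw [pow_mul, ← mul_pow, ← mul_pow]
    ring
  rw [show ((2 * k : ℕ) : ℝ) + 1 / 2 = 1 / 2 + 2 * k by push_cast; ring]
  field_simp
  rw [h24]

theorem integrable_exp_neg_sq_div_two_mul_exp_neg {f : ℝ → ℝ} (hf : Continuous f)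
    (hf0 : ∀ x, 0 ≤ f x) : Integrable fun x : ℝ => exp (-x ^ 2 / 2) * exp (-f x) := by
  have hgauss : Integrable fun x : ℝ => exp (-x ^ 2 / 2) := by
    simpa using integrable_pow_mul_exp_neg_sq_div_two 0
  refine hgauss.mono' (by fun_prop : Continuous _).aestronglyMeasurable (ae_of_all _ fun x => ?_)
  rw [norm_of_nonneg (by positivity)]
  exact mul_le_of_le_one_right (exp_nonneg _) (exp_le_one_iff.2 (neg_nonpos.2 (hf0 x)))

theorem abs_Z_sub_sum_u_le_abs_u (n : ℕ) {lam : ℝ} (hlam : 0 ≤ lam) :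
    |Z lam - ∑ k ∈ range n, u k lam| ≤ |u n lam| := by
  set c := 1 / √(2 * π)
  have hpoly (a : ℝ) (k : ℕ) :
      Integrable fun x : ℝ => exp (-x ^ 2 / 2) * ((a * x ^ 4) ^ k / k !) :=
    ((integrable_pow_mul_exp_neg_sq_div_two (4 * k)).const_mul (a ^ k / k !)).congr
      (ae_of_all _ fun x => by ring)
  have hint (k : ℕ) :
      Integrable fun x : ℝ => exp (-x ^ 2 / 2) * ((-(lam / 24 * x ^ 4)) ^ k / k !) := by
    simpa only [neg_mul] using hpoly (-(lam / 24)) k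
  have hZ : Z lam = c * ∫ x : ℝ, exp (-x ^ 2 / 2) * exp (-(lam / 24 * x ^ 4)) := by
    unfold Z
    congr 2 with x
    rw [← exp_add]
    ring_nf
  have hsum : ∑ k ∈ range n, u k lam
      = c * ∫ x : ℝ, exp (-x ^ 2 / 2) * ∑ k ∈ range n, (-(lam / 24 * x ^ 4)) ^ k / k ! := by
    simp_rw [u_eq_integral, mul_sum]
    rw [integral_finsetSum _ fun k _ => hint k, mul_sum]
  have habs : |u n lam| = c * ∫ x : ℝ, exp (-x ^ 2 / 2) * ((lam / 24 * x ^ 4) ^ n / n !) := by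
    simp_rw [u_eq_integral, neg_pow (lam / 24 * _), mul_div_assoc, mul_left_comm _ ((-1 : ℝ) ^ n),
      integral_const_mul, abs_mul, abs_neg_one_pow, one_mul]
    rw [abs_of_pos (by positivity), abs_of_nonneg (integral_nonneg fun x => by positivity)]
  rw [hZ, hsum, habs, ← mul_sub, ← integral_sub, abs_mul, abs_of_pos (by positivity)]
  · gcongr
    rw [← norm_eq_abs]
    refine norm_integral_le_of_norm_le (hpoly _ n) (ae_of_all _ fun x => ?_)
    rw [← mul_sub, norm_mul, norm_of_nonneg (exp_nonneg _)]
    gcongr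
    exact abs_exp_neg_sub_sum_le n (by positivity)
  · exact integrable_exp_neg_sq_div_two_mul_exp_neg (by fun_prop) fun x => by positivity
  · simp_rw [mul_sum]
    exact integrable_finsetSum _ fun k _ => hint k

/-- The perturbative series is an asymptotic expansion of `Z(λ)` as `λ → 0⁺`. -/
theorem perturbative_series_is_asymptotic_expansion :
    ∀ n : ℕ, ∃ C > (0 : ℝ), ∃ δ > (0 : ℝ), ∀ lam : ℝ, 0 < lam → lam < δ →
      |Z lam - ∑ k ∈ Finset.range n, u k lam| ≤ C * lam ^ n := by
  intro n
  have hu (lam : ℝ) : u n lam = u n 1 * lam ^ n := by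
    simp only [u]
    ring
  have hu1 : u n 1 ≠ 0 := by
    have hΓ : Gamma (2⁻¹ + 2 * n) ≠ 0 := (Gamma_pos_of_pos (by positivity)).ne'
    simp [u, pi_pos.le, Nat.factorial_ne_zero, hΓ]
  refine ⟨|u n 1|, abs_pos.2 hu1, 1, one_pos, fun lam hlam _ => ?_⟩
  calc |Z lam - ∑ k ∈ range n, u k lam| ≤ |u n lam| := abs_Z_sub_sum_u_le_abs_u n hlam.le
    _ = |u n 1| * lam ^ n := by rw [hu, abs_mul, abs_of_pos (pow_pos hlam n)]
end
end

section
/- For every natural number p and every natural number n there exist constants C > 0 and δ > 0 such that for all real λ with 0 < λ < δ one has |∫_{−∞}^{∞} φ^{2p} exp(−φ²/2 − (λ/24)φ⁴) dφ − 2^{p+1/2} Σ_{k=0}^{n−1} ((−1)^k/k!)·Γ(1/2 + p + 2k)·(λ/6)^k| ≤ C·λ^n. That is, the stated series is an asymptotic expansion of the 2p-th moment integral as λ → 0⁺. -/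
/-!
Expand `exp (-λφ⁴/24)` by its Taylor polynomial of degree `n - 1`. Since the argument is
nonpositive, the Lagrange remainder `exp ξ · (λφ⁴/24)ⁿ / n!` has `exp ξ ≤ 1`, so it is at most
`(λφ⁴/24)ⁿ / n!`. Integrating against `φ^(2p) exp (-φ²/2)`, the `k`-th Taylor term becomes the
Gaussian moment `∫ φ^(2m) exp (-φ²/2) = 2^(m + 1/2) Γ(m + 1/2)` with `m = p + 2k`, and the
remainder is `λⁿ` times a constant multiple of the Gaussian moment with `m = p + 2n`.
-/

open Real Finset Set MeasureTheory

section

-- `open Nat` must not reach the theorem: it makes `φ` the totient notation.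
open Nat

lemma taylorWithinEval_exp_zero (n : ℕ) {s : Set ℝ} (hs : UniqueDiffOn ℝ s) (h0 : (0 : ℝ) ∈ s)
    (x : ℝ) :
    taylorWithinEval Real.exp n s 0 x = ∑ k ∈ range (n + 1), x ^ k / k ! := by
  simp_rw [taylor_within_apply, sub_zero, smul_eq_mul]
  refine Finset.sum_congr rfl fun k _ ↦ ?_
  rw [iteratedDerivWithin_eq_iteratedDeriv hs Real.contDiff_exp.contDiffAt h0,
    iteratedDeriv_eq_iterate, Real.iter_deriv_exp, Real.exp_zero]
  field_simp

theorem Real.abs_exp_sub_sum_le_of_nonpos {x : ℝ} (hx : x ≤ 0) (n : ℕ) :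
    |exp x - ∑ k ∈ range n, x ^ k / k !| ≤ |x| ^ n / n ! := by
  rcases hx.eq_or_lt with rfl | hx
  · cases n <;> simp [Finset.sum_range_succ', zero_pow]
  cases n with
  | zero => simpa using Real.exp_le_one_iff.mpr hx.le
  | succ n =>
    obtain ⟨ξ, hξ, hrem⟩ := taylor_mean_remainder_lagrange_iteratedDeriv hx.ne'
      (Real.contDiff_exp.contDiffOn (n := n + 1))
    rw [taylorWithinEval_exp_zero n (uniqueDiffOn_uIcc hx.ne') Set.left_mem_uIcc] at hrem
    rw [hrem, iteratedDeriv_eq_iterate, Real.iter_deriv_exp, sub_zero, abs_div, abs_mul, abs_pow,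
      abs_of_pos (exp_pos ξ), Nat.abs_cast]
    have hξ1 : exp ξ ≤ 1 := by
      rw [uIoo_of_ge hx.le] at hξ
      exact Real.exp_le_one_iff.mpr hξ.2.le
    gcongr
    exact mul_le_of_le_one_left (by positivity) hξ1

lemma integral_pow_two_mul_mul_exp_neg_mul_sq {b : ℝ} (hb : 0 < b) (m : ℕ) :
    ∫ x : ℝ, x ^ (2 * m) * exp (-b * x ^ 2) = b ^ (-(m + 1 / 2 : ℝ)) * Gamma (m + 1 / 2) := by
  have hIoi := integral_rpow_mul_exp_neg_mul_rpow (p := 2) (q := ((2 * m : ℕ) : ℝ)) two_pos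
    (by linarith [(2 * m).cast_nonneg (α := ℝ)]) hb
  have hexp : ((2 * m : ℕ) + 1 : ℝ) / 2 = m + 1 / 2 := by push_cast; ring
  simp_rw [rpow_natCast, rpow_two, neg_div, hexp] at hIoi
  calc ∫ x : ℝ, x ^ (2 * m) * exp (-b * x ^ 2)
      = ∫ x : ℝ, |x| ^ (2 * m) * exp (-b * |x| ^ 2) := by
        simp_rw [(even_two_mul m).pow_abs, sq_abs]
    _ = 2 * ∫ x in Ioi (0 : ℝ), x ^ (2 * m) * exp (-b * x ^ 2) :=
        integral_comp_abs (f := fun x ↦ x ^ (2 * m) * exp (-b * x ^ 2))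
    _ = b ^ (-(m + 1 / 2 : ℝ)) * Gamma (m + 1 / 2) := by
        rw [hIoi]
        ring

lemma integrable_pow_mul_exp_neg_mul_sq {b : ℝ} (hb : 0 < b) (m : ℕ) :
    Integrable fun x : ℝ ↦ x ^ m * exp (-b * x ^ 2) := by
  simpa using integrable_rpow_mul_exp_neg_mul_sq hb (s := m) (by linarith [m.cast_nonneg (α := ℝ)])

lemma integrable_pow_two_mul_mul_exp_neg_mul_sq_sub_mul_pow_four {b c : ℝ} (hb : 0 < b)
    (hc : 0 ≤ c) (p : ℕ) :
    Integrable fun x : ℝ ↦ x ^ (2 * p) * exp (-b * x ^ 2 - c * x ^ 4) := by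
  refine (integrable_pow_mul_exp_neg_mul_sq hb (2 * p)).mono'
    (by fun_prop : Continuous _).aestronglyMeasurable (.of_forall fun x ↦ ?_)
  have hx := (even_two_mul p).pow_nonneg x
  rw [norm_mul, Real.norm_of_nonneg hx, Real.norm_of_nonneg (exp_pos _).le]
  gcongr
  nlinarith [mul_nonneg hc (pow_nonneg (sq_nonneg x) 2)]

lemma pow_two_mul_mul_exp_neg_mul_sq_sub_sum_eq (b c : ℝ) (p n : ℕ) (x : ℝ) :
    x ^ (2 * p) * exp (-b * x ^ 2 - c * x ^ 4) -
        ∑ k ∈ range n, (-c) ^ k / k ! * (x ^ (2 * (p + 2 * k)) * exp (-b * x ^ 2)) =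
      x ^ (2 * p) * exp (-b * x ^ 2) *
        (exp (-(c * x ^ 4)) - ∑ k ∈ range n, (-(c * x ^ 4)) ^ k / k !) := by
  rw [sub_eq_add_neg (-b * x ^ 2), exp_add, mul_sub, mul_sum, mul_assoc]
  congr 1
  refine sum_congr rfl fun k _ ↦ ?_
  ring

lemma abs_pow_two_mul_mul_exp_neg_mul_sq_sub_sum_le {b c : ℝ} (hc : 0 ≤ c) (p n : ℕ) (x : ℝ) :
    |x ^ (2 * p) * exp (-b * x ^ 2 - c * x ^ 4) -
        ∑ k ∈ range n, (-c) ^ k / k ! * (x ^ (2 * (p + 2 * k)) * exp (-b * x ^ 2))| ≤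
      c ^ n / n ! * (x ^ (2 * (p + 2 * n)) * exp (-b * x ^ 2)) := by
  have hcx : -(c * x ^ 4) ≤ 0 := neg_nonpos.mpr (by positivity)
  have hw : 0 ≤ x ^ (2 * p) * exp (-b * x ^ 2) :=
    mul_nonneg ((even_two_mul p).pow_nonneg x) (exp_pos _).le
  rw [pow_two_mul_mul_exp_neg_mul_sq_sub_sum_eq, abs_mul, abs_of_nonneg hw]
  calc _ ≤ x ^ (2 * p) * exp (-b * x ^ 2) * (|-(c * x ^ 4)| ^ n / n !) :=
        mul_le_mul_of_nonneg_left (Real.abs_exp_sub_sum_le_of_nonpos hcx n) hw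
    _ = _ := by
        rw [abs_neg, abs_of_nonneg (by positivity)]
        ring

theorem abs_integral_pow_two_mul_mul_exp_neg_mul_sq_sub_mul_pow_four_sub_sum_le {b c : ℝ}
    (hb : 0 < b) (hc : 0 ≤ c) (p n : ℕ) :
    |(∫ x : ℝ, x ^ (2 * p) * exp (-b * x ^ 2 - c * x ^ 4)) -
        ∑ k ∈ range n, (-c) ^ k / k ! * ∫ x : ℝ, x ^ (2 * (p + 2 * k)) * exp (-b * x ^ 2)| ≤
      c ^ n / n ! * ∫ x : ℝ, x ^ (2 * (p + 2 * n)) * exp (-b * x ^ 2) := by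
  have hterms : ∀ k ∈ range n, Integrable fun x : ℝ ↦
      (-c) ^ k / k ! * (x ^ (2 * (p + 2 * k)) * exp (-b * x ^ 2)) :=
    fun k _ ↦ (integrable_pow_mul_exp_neg_mul_sq hb _).const_mul _
  simp_rw [← integral_const_mul]
  rw [← integral_finsetSum _ hterms, ← integral_sub
    (integrable_pow_two_mul_mul_exp_neg_mul_sq_sub_mul_pow_four hb hc p)
    (integrable_finsetSum _ hterms), ← Real.norm_eq_abs]
  exact norm_integral_le_of_norm_le ((integrable_pow_mul_exp_neg_mul_sq hb _).const_mul _)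
    (.of_forall fun x ↦ abs_pow_two_mul_mul_exp_neg_mul_sq_sub_sum_le hc p n x)

lemma two_rpow_mul_series_term_eq (p k : ℕ) (lam : ℝ) :
    (2 : ℝ) ^ ((p : ℝ) + 1 / 2) * ((-1) ^ k / k ! * Gamma (1 / 2 + p + 2 * k) * (lam / 6) ^ k) =
      (-(lam / 24)) ^ k / k ! *
        ((1 / 2 : ℝ) ^ (-(((p + 2 * k : ℕ) : ℝ) + 1 / 2)) * Gamma ((p + 2 * k : ℕ) + 1 / 2)) := by
  have h2 : (1 / 2 : ℝ) ^ (-(((p + 2 * k : ℕ) : ℝ) + 1 / 2)) = 2 ^ ((p : ℝ) + 1 / 2) * 4 ^ k := by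
    rw [one_div, inv_rpow zero_le_two, ← rpow_neg zero_le_two, neg_neg, Nat.cast_add,
      add_right_comm, rpow_add two_pos, rpow_natCast, pow_mul]
    norm_num
  rw [h2, show (1 / 2 + p + 2 * k : ℝ) = ((p + 2 * k : ℕ) : ℝ) + 1 / 2 by push_cast; ring,
    neg_pow (lam / 24), show lam / 6 = lam / 24 * 4 by ring, mul_pow]
  ring

end

/-- The perturbative series is an asymptotic expansion of the 2p-th moment integral
as `λ → 0⁺`. -/
theorem moment_integral_asymptotic_expansion :
    ∀ p n : ℕ, ∃ C > (0 : ℝ), ∃ δ > (0 : ℝ), ∀ lam : ℝ, 0 < lam → lam < δ →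
      |(∫ φ : ℝ, φ ^ (2 * p) * Real.exp (-φ ^ 2 / 2 - (lam / 24) * φ ^ 4)) -
        (2 : ℝ) ^ ((p : ℝ) + 1 / 2) * ∑ k ∈ Finset.range n,
          ((-1) ^ k / (Nat.factorial k : ℝ)) * Real.Gamma (1 / 2 + p + 2 * k) *
            (lam / 6) ^ k| ≤ C * lam ^ n := by
  intro p n
  have hpos : 0 < ∫ x : ℝ, x ^ (2 * (p + 2 * n)) * exp (-(1 / 2) * x ^ 2) := by
    rw [integral_pow_two_mul_mul_exp_neg_mul_sq one_half_pos]
    exact mul_pos (rpow_pos_of_pos one_half_pos _) (Gamma_pos_of_pos (by positivity))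
  refine ⟨(∫ x : ℝ, x ^ (2 * (p + 2 * n)) * exp (-(1 / 2) * x ^ 2)) / (24 ^ n * Nat.factorial n),
    by positivity, 1, one_pos, fun lam hlam _ ↦ ?_⟩
  calc _ = |(∫ x : ℝ, x ^ (2 * p) * exp (-(1 / 2) * x ^ 2 - lam / 24 * x ^ 4)) -
          ∑ k ∈ range n, (-(lam / 24)) ^ k / Nat.factorial k *
            ∫ x : ℝ, x ^ (2 * (p + 2 * k)) * exp (-(1 / 2) * x ^ 2)| := by
        have hquadratic (x : ℝ) : -x ^ 2 / 2 = -(1 / 2) * x ^ 2 := by ring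
        simp_rw [hquadratic, integral_pow_two_mul_mul_exp_neg_mul_sq one_half_pos,
          ← two_rpow_mul_series_term_eq, mul_sum]
    _ ≤ (lam / 24) ^ n / Nat.factorial n *
          ∫ x : ℝ, x ^ (2 * (p + 2 * n)) * exp (-(1 / 2) * x ^ 2) :=
        abs_integral_pow_two_mul_mul_exp_neg_mul_sq_sub_mul_pow_four_sub_sum_le one_half_pos
          (by positivity) p n
    _ = _ := by rw [div_pow]; ring
end

section
/- Terminant identity: for every real ℓ > −1 and every real x > 0, (1/Γ(ℓ+1)) ∫_0^∞ y^ℓ e^{−y}/(1 + y/x) dy = x^{ℓ+1} e^{x} ∫_x^∞ y^{−ℓ−1} e^{−y} dy; i.e. the terminant function Λ_ℓ(x) equals x^{ℓ+1} e^{x} Γ(−ℓ, x). -/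
open MeasureTheory

noncomputable section

/-!
Writing `1 / (1 + y / x) = x ∫₀^∞ e^{-(x+y)t} dt` turns `Γ(ℓ+1) Λ_ℓ(x)` into a double integral over
`(0,∞)²`, dominated by `x e^{-xt} · y^ℓ e^{-y}`. Integrating in `y` first gives
`Γ(ℓ+1) x ∫₀^∞ e^{-xt} (1+t)^{-ℓ-1} dt`, and the substitution `y = x(1+t)` identifies this
Laplace integral with `x^ℓ e^x Γ(-ℓ, x)`.
-/

open Set Real

theorem integral_Ioi_comp_add_right {E : Type*} [NormedAddCommGroup E] [NormedSpace ℝ E]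
    (g : ℝ → E) (a b : ℝ) :
    ∫ t in Ioi a, g (t + b) = ∫ u in Ioi (a + b), g u := by
  have := (measurePreserving_add_right volume b).setIntegral_preimage_emb
    (measurableEmbedding_addRight b) g (Ioi (a + b))
  rwa [preimage_add_const_Ioi, add_sub_cancel_right] at this

theorem integral_Ioi_eq_smul_integral_comp_mul_one_add {E : Type*} [NormedAddCommGroup E]
    [NormedSpace ℝ E] (g : ℝ → E) {x : ℝ} (hx : 0 < x) :
    ∫ y in Ioi x, g y = x • ∫ t in Ioi 0, g (x * (1 + t)) := by
  have := integral_comp_mul_left_Ioi' g 1 hx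
  rw [mul_one] at this
  rw [← this, ← zero_add (1 : ℝ), ← integral_Ioi_comp_add_right, zero_add]
  simp only [add_comm]

theorem integral_exp_neg_mul_Ioi_zero {c : ℝ} (hc : 0 < c) :
    ∫ t in Ioi (0 : ℝ), exp (-(c * t)) = c⁻¹ := by
  simpa [neg_mul, div_neg, neg_div] using integral_exp_mul_Ioi (neg_lt_zero.2 hc) 0

theorem integral_rpow_mul_exp_neg_one_add_mul {ℓ t : ℝ} (hl : -1 < ℓ) (ht : -1 < t) :
    ∫ y in Ioi (0 : ℝ), y ^ ℓ * exp (-((1 + t) * y)) = Gamma (ℓ + 1) * (1 + t) ^ (-ℓ - 1) := by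
  have h1t : 0 < 1 + t := by linarith
  have := integral_rpow_mul_exp_neg_mul_Ioi (a := ℓ + 1) (by linarith) h1t
  rw [add_sub_cancel_right] at this
  rw [this, one_div, inv_rpow h1t.le, ← rpow_neg h1t.le, neg_add', mul_comm]

theorem integrable_terminant_kernel {ℓ x : ℝ} (hl : -1 < ℓ) (hx : 0 < x) :
    Integrable (fun p : ℝ × ℝ => x * exp (-(x * p.1)) * (p.2 ^ ℓ * exp (-((1 + p.1) * p.2))))
      ((volume.restrict (Ioi 0)).prod (volume.restrict (Ioi 0))) := by
  have hexp : IntegrableOn (fun t : ℝ => x * exp (-(x * t))) (Ioi 0) := by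
    have := (exp_neg_integrableOn_Ioi 0 hx).const_mul x
    simp only [neg_mul] at this
    exact this
  have hGamma : IntegrableOn (fun y : ℝ => y ^ ℓ * exp (-y)) (Ioi 0) := by
    simpa only [add_sub_cancel_right, mul_comm] using
      GammaIntegral_convergent (s := ℓ + 1) (by linarith)
  refine (hexp.mul_prod hGamma).mono' (by fun_prop) ?_
  rw [Measure.prod_restrict]
  filter_upwards [ae_restrict_mem (measurableSet_Ioi.prod measurableSet_Ioi)] with p ⟨ht, hy⟩
  simp only [mem_Ioi] at ht hy
  rw [Real.norm_of_nonneg (by positivity)]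
  gcongr
  nlinarith

theorem integral_rpow_mul_exp_neg_div_one_add_div {ℓ x : ℝ} (hl : -1 < ℓ) (hx : 0 < x) :
    ∫ y in Ioi (0 : ℝ), y ^ ℓ * exp (-y) / (1 + y / x) =
      Gamma (ℓ + 1) * x * ∫ t in Ioi (0 : ℝ), exp (-(x * t)) * (1 + t) ^ (-ℓ - 1) := by
  calc ∫ y in Ioi (0 : ℝ), y ^ ℓ * exp (-y) / (1 + y / x)
      = ∫ y in Ioi (0 : ℝ), ∫ t in Ioi (0 : ℝ),
          x * exp (-(x * t)) * (y ^ ℓ * exp (-((1 + t) * y))) := by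
        refine setIntegral_congr_fun measurableSet_Ioi fun y (hy : 0 < y) => ?_
        have hexp : ∀ t, x * exp (-(x * t)) * (y ^ ℓ * exp (-((1 + t) * y))) =
            x * (y ^ ℓ * exp (-y)) * exp (-((x + y) * t)) := fun t => by
          have : exp (-(x * t)) * exp (-((1 + t) * y)) = exp (-y) * exp (-((x + y) * t)) := by
            rw [← exp_add, ← exp_add]
            ring_nf
          linear_combination x * y ^ ℓ * this
        simp_rw [hexp]
        rw [integral_const_mul, integral_exp_neg_mul_Ioi_zero (by positivity)]
        field_simp
    _ = ∫ t in Ioi (0 : ℝ), ∫ y in Ioi (0 : ℝ),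
          x * exp (-(x * t)) * (y ^ ℓ * exp (-((1 + t) * y))) :=
        (integral_integral_swap (integrable_terminant_kernel hl hx)).symm
    _ = ∫ t in Ioi (0 : ℝ), Gamma (ℓ + 1) * x * (exp (-(x * t)) * (1 + t) ^ (-ℓ - 1)) := by
        refine setIntegral_congr_fun measurableSet_Ioi fun t (ht : 0 < t) => ?_
        rw [integral_const_mul, integral_rpow_mul_exp_neg_one_add_mul hl (by linarith)]
        ring
    _ = _ := integral_const_mul _ _

theorem integral_Ioi_rpow_mul_exp_neg (a : ℝ) {x : ℝ} (hx : 0 < x) :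
    ∫ y in Ioi x, y ^ a * exp (-y) =
      x ^ (a + 1) * exp (-x) * ∫ t in Ioi (0 : ℝ), exp (-(x * t)) * (1 + t) ^ a := by
  rw [integral_Ioi_eq_smul_integral_comp_mul_one_add _ hx, smul_eq_mul, ← integral_const_mul,
    ← integral_const_mul]
  refine setIntegral_congr_fun measurableSet_Ioi fun t (ht : 0 < t) => ?_
  rw [mul_rpow hx.le (by positivity), rpow_add_one hx.ne', mul_add, neg_add, exp_add, mul_one]
  ring

/-- The terminant function `Λ_ℓ(x)` equals `x^{ℓ+1} e^x Γ(-ℓ, x)`. -/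
theorem terminant_eq_incomplete_gamma (ℓ x : ℝ) (hl : -1 < ℓ) (hx : 0 < x) :
    (1 / Real.Gamma (ℓ + 1)) *
        ∫ y in Set.Ioi (0 : ℝ), y ^ ℓ * Real.exp (-y) / (1 + y / x) =
      x ^ (ℓ + 1) * Real.exp x * ∫ y in Set.Ioi x, y ^ (-ℓ - 1) * Real.exp (-y) := by
  have hΓ : Gamma (ℓ + 1) ≠ 0 := (Gamma_pos_of_pos (by linarith)).ne'
  have hpow : x ^ (ℓ + 1) * x ^ (-ℓ - 1 + 1) = x := by
    rw [← rpow_add hx, show ℓ + 1 + (-ℓ - 1 + 1) = 1 by ring, rpow_one]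
  rw [integral_rpow_mul_exp_neg_div_one_add_div hl hx, integral_Ioi_rpow_mul_exp_neg _ hx]
  set J := ∫ t in Ioi (0 : ℝ), exp (-(x * t)) * (1 + t) ^ (-ℓ - 1)
  calc 1 / Gamma (ℓ + 1) * (Gamma (ℓ + 1) * x * J)
      = x ^ (ℓ + 1) * x ^ (-ℓ - 1 + 1) * (exp x * exp (-x)) * J := by
        rw [hpow, ← exp_add, add_neg_cancel, exp_zero]
        field_simp
    _ = x ^ (ℓ + 1) * exp x * (x ^ (-ℓ - 1 + 1) * exp (-x) * J) := by ring
end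
end
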